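/- arXiv:2403.08209 — 5 statements merged into one kernel-verified Lean document; each statement's English description precedes it below -/
import Mathlib

section
/- Let x and v be strings with |v| ≤ 2|x|. Then the set of occurrences of x inside v forms a single arithmetic progression; moreover, if x has at least three occurrences in v, the common difference of this progression equals the minimum period of x. -/
/-!
Two occurrences `i < j` of `x` in `v` with `|v| ≤ 2|x|` overlap (or abut), so `j - i` is a period
of `x`. Given three occurrences `a < c < b`, the periods `c - a` and `b - c` add up to at most
`|x|`, so by the weak periodicity lemma the minimum period `p` divides both. Hence every
occurrence lies in `a + pℕ`; conversely the occurrences at `a` and `b` spell out `v[a..b+|x|)`,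
which has period `p`, so every position of `a + pℕ` up to `b` is an occurrence.
-/

variable {α : Type*}

/-- The substring `T[i..i+ℓ)` (0-indexed). -/
def sub (T : List α) (i ℓ : ℕ) : List α := (T.drop i).take ℓ

/-- `p` is a period of `w`: `0 < p ≤ |w|` and `w[i] = w[i+p]` whenever both sides exist. -/
def IsPeriod (w : List α) (p : ℕ) : Prop :=
  0 < p ∧ p ≤ w.length ∧ ∀ i, i + p < w.length → w[i]? = w[i + p]?

/-- The minimum period of `w`. -/
noncomputable def minPeriod (w : List α) : ℕ := sInf {p | IsPeriod w p}

namespace IsPeriod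

variable {w : List α} {p q : ℕ}

lemma minPeriod_le (hq : IsPeriod w q) : minPeriod w ≤ q :=
  Nat.sInf_le hq

lemma isPeriod_minPeriod (hq : IsPeriod w q) : IsPeriod w (minPeriod w) :=
  Nat.sInf_mem (s := {p | IsPeriod w p}) ⟨q, hq⟩

lemma getElem?_add_of_dvd (hp : IsPeriod w p) {m i : ℕ} (hm : p ∣ m) (h : i + m < w.length) :
    w[i]? = w[i + m]? := by
  obtain ⟨k, rfl⟩ := hm
  induction k with
  | zero => simp
  | succ k ih =>
    rw [ih (by nlinarith), hp.2.2 _ (by rw [Nat.mul_succ] at h; omega), Nat.mul_succ, add_assoc]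

lemma sub_of_lt (hp : IsPeriod w p) (hq : IsPeriod w q) (hpq : p < q)
    (hlen : p + q ≤ w.length) : IsPeriod w (q - p) := by
  refine ⟨by omega, by omega, fun i hi => ?_⟩
  by_cases hiq : i + q < w.length
  · rw [hq.2.2 i hiq, hp.2.2 (i + (q - p)) (by omega)]
    congr 1; omega
  · -- `i ≥ p` here, so we can step back by `p` and forward by `q`
    have hback := hp.2.2 (i - p) (by omega)
    rw [Nat.sub_add_cancel (by omega)] at hback
    rw [← hback, hq.2.2 (i - p) (by omega)]
    congr 1; omega

/-- A weak form of the periodicity lemma of Fine and Wilf. -/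
lemma minPeriod_dvd (hq : IsPeriod w q) (hlen : minPeriod w + q ≤ w.length) :
    minPeriod w ∣ q := by
  induction q using Nat.strong_induction_on with
  | _ q ih =>
    have hp := hq.isPeriod_minPeriod
    have := hp.1
    rcases hq.minPeriod_le.eq_or_lt with heq | hlt
    · exact heq ▸ dvd_rfl
    · have hsub := ih (q - minPeriod w) (by omega) (hp.sub_of_lt hq hlt (by omega)) (by omega)
      exact (Nat.dvd_sub_self_right.mp hsub).resolve_right (by omega)

end IsPeriod

def occurrences (x v : List α) : Set ℕ :=
  {i | i + x.length ≤ v.length ∧ sub v i x.length = x}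

section occurrences

variable {x v : List α} {i j : ℕ}

lemma mem_occurrences_iff :
    i ∈ occurrences x v ↔ i + x.length ≤ v.length ∧ ∀ t < x.length, v[i + t]? = x[t]? := by
  refine and_congr_right fun hi => ⟨fun hs t ht => ?_, fun h => List.ext_getElem? fun t => ?_⟩
  · rw [← hs, sub, List.getElem?_take_of_lt ht, List.getElem?_drop]
  · by_cases ht : t < x.length
    · rw [sub, List.getElem?_take_of_lt ht, List.getElem?_drop, h t ht]
    · rw [sub, List.getElem?_take, if_neg ht, eq_comm, List.getElem?_eq_none_iff]
      omega

lemma isPeriod_sub_of_mem_occurrences (hi : i ∈ occurrences x v) (hj : j ∈ occurrences x v)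
    (hij : i < j) (hji : j ≤ i + x.length) : IsPeriod x (j - i) := by
  rw [mem_occurrences_iff] at hi hj
  refine ⟨by omega, by omega, fun t ht => ?_⟩
  rw [← hi.2 _ ht, ← hj.2 t (by omega)]
  congr 1; omega

lemma minPeriod_dvd_of_mem_occurrences {a b : ℕ} (ha : a ∈ occurrences x v)
    (hi : i ∈ occurrences x v) (hb : b ∈ occurrences x v) (hai : a < i) (hib : i < b)
    (hspan : b ≤ a + x.length) : minPeriod x ∣ i - a ∧ minPeriod x ∣ b - i := by
  have hleft := isPeriod_sub_of_mem_occurrences ha hi hai (by omega)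
  have hright := isPeriod_sub_of_mem_occurrences hi hb hib (by omega)
  have := hleft.minPeriod_le
  have := hright.minPeriod_le
  exact ⟨hleft.minPeriod_dvd (by omega), hright.minPeriod_dvd (by omega)⟩

lemma add_mem_occurrences_of_dvd {p q r : ℕ} (hp : IsPeriod x p) (hi : i ∈ occurrences x v)
    (hiq : i + q ∈ occurrences x v) (hq : q ≤ x.length) (hpq : p ∣ q) (hpr : p ∣ r)
    (hrq : r ≤ q) : i + r ∈ occurrences x v := by
  rw [mem_occurrences_iff] at hi hiq ⊢
  refine ⟨by omega, fun t ht => ?_⟩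
  by_cases hrt : r + t < x.length
  · rw [add_assoc, hi.2 _ hrt, add_comm r, ← hp.getElem?_add_of_dvd hpr (by omega)]
  · -- past the end of the copy at `i`, read from the copy at `i + q`
    rw [show i + r + t = i + q + (r + t - q) by omega, hiq.2 _ (by omega),
      hp.getElem?_add_of_dvd (Nat.dvd_sub hpq hpr) (by omega)]
    congr 1; omega

lemma mem_occurrences_iff_minPeriod_dvd {a b c : ℕ} (ha : a ∈ occurrences x v)
    (hb : b ∈ occurrences x v) (hc : c ∈ occurrences x v) (hac : a < c) (hcb : c < b)
    (hbounds : ∀ i ∈ occurrences x v, a ≤ i ∧ i ≤ b) (hspan : b ≤ a + x.length) :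
    i ∈ occurrences x v ↔ a ≤ i ∧ i ≤ b ∧ minPeriod x ∣ i - a := by
  have hp := (isPeriod_sub_of_mem_occurrences ha hc hac (by omega)).isPeriod_minPeriod
  have hdvd : ∀ i ∈ occurrences x v, minPeriod x ∣ i - a := by
    intro i hi
    obtain ⟨hai, hib⟩ := hbounds i hi
    rcases hai.eq_or_lt, hib.eq_or_lt with ⟨hai | hai, hib | hib⟩
    · simp [← hai]
    · simp [← hai]
    · obtain ⟨h₁, h₂⟩ := minPeriod_dvd_of_mem_occurrences ha hc hb hac hcb hspan
      rw [hib, ← Nat.sub_add_sub_cancel hcb.le hac.le]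
      exact dvd_add h₂ h₁
    · exact (minPeriod_dvd_of_mem_occurrences ha hi hb hai hib hspan).1
  refine ⟨fun hi => ⟨(hbounds i hi).1, (hbounds i hi).2, hdvd i hi⟩, ?_⟩
  rintro ⟨hai, hib, hpi⟩
  have := add_mem_occurrences_of_dvd hp ha (q := b - a) (by rwa [Nat.add_sub_cancel' (by omega)])
    (by omega) (hdvd b hb) hpi (by omega)
  rwa [Nat.add_sub_cancel' hai] at this

end occurrences

lemma image_add_mul_Iio {a d m : ℕ} (hd : 0 < d) (hdm : d ∣ m) :
    (fun t => a + t * d) '' Set.Iio (m / d + 1) = {i | a ≤ i ∧ i ≤ a + m ∧ d ∣ i - a} := by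
  ext i
  constructor
  · rintro ⟨t, ht, rfl⟩
    have : t * d ≤ m / d * d := Nat.mul_le_mul_right d (Nat.lt_succ_iff.mp ht)
    rw [Nat.div_mul_cancel hdm] at this
    show a ≤ a + t * d ∧ a + t * d ≤ a + m ∧ d ∣ a + t * d - a
    exact ⟨by omega, by omega, by simp⟩
  · rintro ⟨hai, him, t, ht⟩
    refine ⟨t, ?_, by simp only; rw [mul_comm, ← ht]; omega⟩
    rw [Set.mem_Iio, Nat.lt_succ_iff, ← Nat.mul_div_cancel_left t hd, ← ht]
    exact Nat.div_le_div_right (by omega)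

lemma exists_arithProg_of_forall_mem_iff {S : Set ℕ} {a d m p : ℕ} (hd : 0 < d) (hdm : d ∣ m)
    (hS : ∀ i, i ∈ S ↔ a ≤ i ∧ i ≤ a + m ∧ d ∣ i - a) (hdp : 3 ≤ m / d + 1 → d = p) :
    ∃ a d k : ℕ, S = (fun t => a + t * d) '' Set.Iio k ∧
      (∀ t₁ < k, ∀ t₂ < k, a + t₁ * d = a + t₂ * d → t₁ = t₂) ∧ (3 ≤ k → d = p) :=
  ⟨a, d, m / d + 1, by rw [image_add_mul_Iio hd hdm]; exact Set.ext hS,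
    fun _ _ _ _ h => Nat.eq_of_mul_eq_mul_right hd (by omega), hdp⟩

lemma exists_arithProg_of_forall_mem_iff_eq_or_eq {S : Set ℕ} {a b p : ℕ} (hab : a ≤ b)
    (hS : ∀ i, i ∈ S ↔ i = a ∨ i = b) :
    ∃ a d k : ℕ, S = (fun t => a + t * d) '' Set.Iio k ∧
      (∀ t₁ < k, ∀ t₂ < k, a + t₁ * d = a + t₂ * d → t₁ = t₂) ∧ (3 ≤ k → d = p) := by
  rcases hab.eq_or_lt with rfl | hlt
  · refine exists_arithProg_of_forall_mem_iff (a := a) one_pos (one_dvd 0) (fun i => ?_) (by simp)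
    rw [hS]; simp only [add_zero, one_dvd, and_true]; omega
  · refine exists_arithProg_of_forall_mem_iff (a := a) (Nat.sub_pos_of_lt hlt) dvd_rfl (fun i => ?_)
      (by rw [Nat.div_self (by omega)]; omega)
    rw [hS]
    constructor
    · rintro (rfl | rfl) <;> exact ⟨by omega, by omega, by simp⟩
    · rintro ⟨hai, hib, k, hk⟩
      rcases Nat.eq_zero_or_pos k with rfl | hk
      · left; rw [mul_zero] at hk; omega
      · right; have := Nat.le_mul_of_pos_right (b - a) hk; omega

theorem stmt1_general (x v : List α) (hv : v.length ≤ 2 * x.length) :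
    ∃ a d k : ℕ,
      {i | i + x.length ≤ v.length ∧ sub v i x.length = x} =
        (fun t => a + t * d) '' Set.Iio k ∧
      (∀ t₁ < k, ∀ t₂ < k, a + t₁ * d = a + t₂ * d → t₁ = t₂) ∧
      (3 ≤ k → d = minPeriod x) := by
  change ∃ a d k : ℕ, occurrences x v = _ ∧ _
  set S := occurrences x v
  rcases S.eq_empty_or_nonempty with hS | hS
  · exact ⟨0, 0, 0, by simp [hS], by simp, by omega⟩
  have hbdd : BddAbove S := ⟨v.length, fun i hi => by have := hi.1; omega⟩
  set a := sInf S
  set b := sSup S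
  have ha : a ∈ S := Nat.sInf_mem hS
  have hb : b ∈ S := Nat.sSup_mem hS hbdd
  have hbounds : ∀ i ∈ S, a ≤ i ∧ i ≤ b := fun i hi => ⟨Nat.sInf_le hi, le_csSup hbdd hi⟩
  have hspan : b ≤ a + x.length := by have := hb.1; omega
  by_cases hmid : ∃ c ∈ S, a < c ∧ c < b
  · obtain ⟨c, hc, hac, hcb⟩ := hmid
    have hmem i := mem_occurrences_iff_minPeriod_dvd (i := i) ha hb hc hac hcb hbounds hspan
    have hp := (isPeriod_sub_of_mem_occurrences ha hc hac (by omega)).isPeriod_minPeriod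
    refine exists_arithProg_of_forall_mem_iff (a := a) hp.1 ((hmem b).mp hb).2.2
      (fun i => ?_) fun _ => rfl
    rw [hmem, Nat.add_sub_cancel' (hbounds b hb).1]
  · push Not at hmid
    refine exists_arithProg_of_forall_mem_iff_eq_or_eq (hbounds a ha).2 fun i => ⟨fun hi => ?_, ?_⟩
    · have := hbounds i hi; have := hmid i hi; omega
    · rintro (rfl | rfl) <;> assumption

/-- The occurrences of `x` inside `v`, where `|v| ≤ 2|x|`, form a single
arithmetic progression; if there are at least three occurrences, the common
difference equals the minimum period of `x`. -/
theorem stmt1 (x v : List α) (hx : 0 < x.length) (hv : v.length ≤ 2 * x.length) :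
    ∃ a d k : ℕ,
      {i | i + x.length ≤ v.length ∧ sub v i x.length = x} =
        (fun t => a + t * d) '' Set.Iio k ∧
      (∀ t₁ < k, ∀ t₂ < k, a + t₁ * d = a + t₂ * d → t₁ = t₂) ∧
      (3 ≤ k → d = minPeriod x) :=
  stmt1_general x v hv
end

section
/- Let T be a string and let s, b, ℓ satisfy 1 ≤ s < b and T[s..s+ℓ) = T[b..b+ℓ). Then for every position i with b ≤ i < b+ℓ, it holds that T[i] = T[s + ((i−b) mod (b−s))]. (This justifies rerouting every position of a phrase, including a self-referencing one, to a position strictly before the phrase start.) -/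
variable {α : Type*}

/-- If `T[s..s+ℓ) = T[b..b+ℓ)` with `s < b`, then every position `i` of the phrase
`T[b..b+ℓ)` satisfies `T[i] = T[s + ((i - b) mod (b - s))]`; so every position of a
phrase, including a self-referencing one, can be rerouted to a position strictly
before the phrase start. -/
theorem stmt3 (T : List α) (s b ℓ : ℕ) (hsb : s < b) (hn : b + ℓ ≤ T.length)
    (heq : sub T s ℓ = sub T b ℓ) :
    ∀ i, b ≤ i → i < b + ℓ → T[i]? = T[s + (i - b) % (b - s)]? := by
  set p := b - s with hp
  have hppos : 0 < p := Nat.sub_pos_of_lt hsb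
  have key : ∀ k, k < ℓ → T[b + k]? = T[s + k]? := by
    intro k hk
    have := congrArg (fun l => l[k]?) heq
    simp only [sub, List.getElem?_take, hk, if_pos, List.getElem?_drop] at this
    simpa using this.symm
  have main : ∀ k, k < ℓ → T[b + k]? = T[s + k % p]? := by
    intro k
    induction k using Nat.strong_induction_on with
    | _ k ih =>
      intro hk
      rcases lt_or_ge k p with h | h
      · rw [Nat.mod_eq_of_lt h]; exact key k hk
      · have hsk : s + k = b + (k - p) := by omega
        have h1 : T[b + k]? = T[s + k]? := key k hk
        have h2 : T[b + (k - p)]? = T[s + (k - p) % p]? :=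
          ih (k - p) (by omega) (by omega)
        rw [h1, hsk, h2, ← Nat.mod_eq_sub_mod h]
  intro i hbi hi
  have : i = b + (i - b) := by omega
  rw [this]
  simpa using main (i - b) (by omega)
end

section
/- Let G be an RLSLP of size g generating a string T, and let h be the height of the parse tree of G. Then there exists an h-bounded LZ-like encoding of T whose size is at most C·g for an absolute constant C. -/
variable {α : Type*}

/-- Starting position (0-indexed) of the `j`-th phrase (0-indexed) of a parsing,
the parsing being given as a list of (length, source) pairs. -/
def startOf (P : List (ℕ × ℕ)) (j : ℕ) : ℕ := ((P.take j).map Prod.fst).sum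

/-- Length of the `j`-th phrase. -/
def lenOf (P : List (ℕ × ℕ)) (j : ℕ) : ℕ := (P[j]?.map Prod.fst).getD 0

/-- Source of the `j`-th phrase. -/
def srcOf (P : List (ℕ × ℕ)) (j : ℕ) : ℕ := (P[j]?.map Prod.snd).getD 0

/-- `P` is an LZ-like encoding of `T`: phrases have positive length, cover `T`,
and every phrase of length at least 2 has a source strictly before its start with a
matching (possibly overlapping) previous occurrence. (Length-1 phrases are literal
symbols; the symbol is determined by `T`, so it need not be stored.) -/
def IsLZ (T : List α) (P : List (ℕ × ℕ)) : Prop :=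
  (∀ q ∈ P, 1 ≤ q.1) ∧ (P.map Prod.fst).sum = T.length ∧
  ∀ j < P.length, 2 ≤ lenOf P j →
    srcOf P j < startOf P j ∧
    sub T (srcOf P j) (lenOf P j) = sub T (startOf P j) (lenOf P j)

/-- `H` is the height function of the LZ-like encoding `P`:
`H i = 0` on length-1 phrases, and otherwise
`H i = H (s_j + (i - b_j) % (b_j - s_j)) + 1` for position `i` of phrase `j`. -/
def IsHeight (P : List (ℕ × ℕ)) (H : ℕ → ℕ) : Prop :=
  ∀ j < P.length, ∀ i, startOf P j ≤ i → i < startOf P j + lenOf P j →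
    (lenOf P j = 1 → H i = 0) ∧
    (2 ≤ lenOf P j →
      H i = H (srcOf P j + (i - startOf P j) % (startOf P j - srcOf P j)) + 1)

/-- The LZ-like encoding `P` of `T` is `h`-bounded. -/
def HBounded (T : List α) (P : List (ℕ × ℕ)) (h : ℕ) : Prop :=
  ∃ H : ℕ → ℕ, IsHeight P H ∧ ∀ i < T.length, H i ≤ h

/-- `z^h(T)`: minimum size of an `h`-bounded LZ-like encoding of `T`. -/
noncomputable def zh (T : List α) (h : ℕ) : ℕ :=
  sInf {k | ∃ P : List (ℕ × ℕ), IsLZ T P ∧ HBounded T P h ∧ P.length = k}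

/-- `lpf_T(b)`: length of the longest previous factor at position `b` (0-indexed). -/
noncomputable def lpf (T : List α) (b : ℕ) : ℕ :=
  sSup {l | b + l ≤ T.length ∧ ∃ s < b, sub T s l = sub T b l}

/-- Number of phrases of the greedy LZ77 parsing of `T[b..)`;
`lzCount T 0 = z(T)` is the size of the greedy LZ77 parsing of `T`. -/
noncomputable def lzCount (T : List α) (b : ℕ) : ℕ :=
  if hb : b < T.length then lzCount T (b + max 1 (lpf T b)) + 1 else 0
termination_by T.length - b
decreasing_by
  have h1 : 1 ≤ max 1 (lpf T b) := le_max_left _ _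
  omega

/-- Starting positions of the phrases of the greedy LZ77 parsing of `T` (from `b`). -/
noncomputable def lzStarts (T : List α) (b : ℕ) : List ℕ :=
  if hb : b < T.length then b :: lzStarts T (b + max 1 (lpf T b)) else []
termination_by T.length - b
decreasing_by
  have h1 : 1 ≤ max 1 (lpf T b) := le_max_left _ _
  omega

/-- Right-hand side of a rule of a run-length straight-line program:
`A → a`, `A → BC`, or `A → B^t`. -/
inductive RLRhs (α : Type*) where
  | leaf : α → RLRhs α
  | pair : ℕ → ℕ → RLRhs α
  | pow : ℕ → ℕ → RLRhs α

/-- A run-length straight-line program (RLSLP): variables are `0, …, m-1`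
(the start variable being `m-1`), each with exactly one rule referencing
only smaller variables; run-length rules `A → B^t` require `t ≥ 2`.
Its size is its number `m` of rules. -/
structure RLSLP (α : Type*) where
  m : ℕ
  m_pos : 0 < m
  rule : ℕ → RLRhs α
  wf_pair : ∀ i b c, i < m → rule i = .pair b c → b < i ∧ c < i
  wf_pow : ∀ i b t, i < m → rule i = .pow b t → b < i ∧ 2 ≤ t

/-- The string derived from variable `i` of `G`. -/
def RLSLP.expand (G : RLSLP α) (i : ℕ) : List α :=
  match G.rule i with
  | .leaf a => [a]
  | .pair b c => if _h : b < i ∧ c < i then G.expand b ++ G.expand c else []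
  | .pow b t => if _h : b < i then (List.replicate t (G.expand b)).flatten else []
termination_by i
decreasing_by all_goals omega

/-- `G` generates the string `T`. -/
def RLSLP.Generates (G : RLSLP α) (T : List α) : Prop := G.expand (G.m - 1) = T

/-- Height of the parse (sub)tree of `G` rooted at variable `i`:
leaf rules `A → a` give leaves of the parse tree. -/
def RLSLP.varHeight (G : RLSLP α) (i : ℕ) : ℕ :=
  match G.rule i with
  | .leaf _ => 0
  | .pair b c => if _h : b < i ∧ c < i then max (G.varHeight b) (G.varHeight c) + 1 else 0
  | .pow b _ => if _h : b < i then G.varHeight b + 1 else 0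
termination_by i
decreasing_by all_goals omega

/-- Height of the parse tree of `G`. -/
def RLSLP.parseHeight (G : RLSLP α) : ℕ := G.varHeight (G.m - 1)

/-- `ĝ_rl(T)`: the size of the smallest RLSLP generating `T`. -/
noncomputable def grl (T : List α) : ℕ :=
  sInf {g | ∃ G : RLSLP α, G.Generates T ∧ G.m = g}

/-!
Traverse the parse tree of `G` from left to right, recording for each variable the position of
its first occurrence; the invariant is that every position of a recorded occurrence of `A` has
height at most the height of `A` in the parse tree. Later occurrences of `A` become a single
phrase copying the recorded one, of height at most `height A + 1`, which is at most the height of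
the parent. At a first occurrence the rule of `A` is applied once: a literal for `A → a`, the
encodings of `B` and `C` for `A → BC`, and for `A → B^t` the encoding of one copy of the base
`w` of the chain of runs below `B` (applying its rule even if `w` was seen before, so that its
heights stay at most `height w`), followed by a single self-overlapping phrase of period `|w|`.
A first occurrence thus emits at most three phrases of its own, and every variable has one first
occurrence, so at most `3g` phrases are produced.
-/

theorem sub_eq_of_prefix {T w : List α} {p : ℕ} (h : w <+: T.drop p) : sub T p w.length = w :=
  (List.prefix_iff_eq_take.mp h).symm

theorem prefix_drop_of_append_prefix {T u v : List α} {p : ℕ} (h : u ++ v <+: T.drop p) :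
    u <+: T.drop p ∧ v <+: T.drop (p + u.length) := by
  obtain ⟨r, hr⟩ := h
  refine ⟨⟨v ++ r, by rw [← hr, List.append_assoc]⟩, ⟨r, ?_⟩⟩
  rw [← List.drop_drop, ← hr, List.append_assoc, List.drop_left]

theorem sub_eq_sub_of_flatten_replicate_prefix {T w : List α} {p r : ℕ}
    (h : (List.replicate (r + 1) w).flatten <+: T.drop p) :
    sub T p (r * w.length) = sub T (p + w.length) (r * w.length) := by
  have hlen : ((List.replicate r w).flatten).length = r * w.length := by
    simp [List.length_flatten, List.map_replicate, List.sum_replicate]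
  have h₁ := h
  rw [List.replicate_succ', List.flatten_append, List.flatten_singleton] at h₁
  rw [List.replicate_succ, List.flatten_cons] at h
  rw [← hlen, sub_eq_of_prefix (prefix_drop_of_append_prefix h₁).1,
    sub_eq_of_prefix (prefix_drop_of_append_prefix h).2]

theorem flatten_replicate_flatten_replicate (t e : ℕ) (w : List α) :
    (List.replicate t (List.replicate e w).flatten).flatten =
      (List.replicate (t * e) w).flatten := by
  rw [← List.map_replicate, ← List.flatten_flatten, List.flatten_replicate_replicate]

section Phrases

variable {P R : List (ℕ × ℕ)} {j : ℕ}

theorem startOf_append_of_le (h : j ≤ P.length) : startOf (P ++ R) j = startOf P j := by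
  simp [startOf, List.take_append_of_le_length h]

theorem lenOf_append_of_lt (h : j < P.length) : lenOf (P ++ R) j = lenOf P j := by
  simp [lenOf, List.getElem?_append_left h]

theorem srcOf_append_of_lt (h : j < P.length) : srcOf (P ++ R) j = srcOf P j := by
  simp [srcOf, List.getElem?_append_left h]

theorem startOf_append_length (x : ℕ × ℕ) :
    startOf (P ++ [x]) P.length = (P.map Prod.fst).sum := by
  simp [startOf]

theorem lenOf_append_length (x : ℕ × ℕ) : lenOf (P ++ [x]) P.length = x.1 := by
  simp [lenOf]

theorem srcOf_append_length (x : ℕ × ℕ) : srcOf (P ++ [x]) P.length = x.2 := by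
  simp [srcOf]

theorem startOf_add_lenOf_le (h : j < P.length) :
    startOf P j + lenOf P j ≤ (P.map Prod.fst).sum := by
  have hj : j < (P.map Prod.fst).length := by simpa using h
  have hsucc : startOf P j + lenOf P j = ((P.map Prod.fst).take (j + 1)).sum := by
    rw [List.sum_take_succ _ _ hj]
    simp [startOf, lenOf, List.getElem?_eq_getElem h, List.map_take]
  rw [hsucc, ← List.sum_take_add_sum_drop (P.map Prod.fst) (j + 1)]
  exact Nat.le_add_right _ _

end Phrases

def LZValid (T : List α) (P : List (ℕ × ℕ)) : Prop :=
  (∀ q ∈ P, 1 ≤ q.1) ∧ ∀ j < P.length, 2 ≤ lenOf P j →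
    srcOf P j < startOf P j ∧ sub T (srcOf P j) (lenOf P j) = sub T (startOf P j) (lenOf P j)

namespace LZValid

variable {T : List α} {P R : List (ℕ × ℕ)}

theorem nil : LZValid T [] := ⟨by simp, by simp⟩

theorem src_lt (hP : LZValid T P) {j : ℕ} (hj : j < P.length) (h2 : 2 ≤ lenOf P j) :
    srcOf P j < startOf P j :=
  (hP.2 j hj h2).1

theorem of_append (hP : LZValid T (P ++ R)) : LZValid T P := by
  refine ⟨fun q hq => hP.1 q (List.mem_append_left R hq), fun j hj h2 => ?_⟩
  have := hP.2 j (by simp; omega)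
  rw [lenOf_append_of_lt hj, srcOf_append_of_lt hj, startOf_append_of_le hj.le] at this
  exact this h2

theorem append_singleton (hP : LZValid T P) {ℓ s : ℕ} (hℓ : 1 ≤ ℓ)
    (hs : 2 ≤ ℓ → s < (P.map Prod.fst).sum ∧ sub T s ℓ = sub T (P.map Prod.fst).sum ℓ) :
    LZValid T (P ++ [(ℓ, s)]) := by
  refine ⟨fun q hq => ?_, fun j hj h2 => ?_⟩
  · rcases List.mem_append.mp hq with hq | hq
    · exact hP.1 q hq
    · rw [List.mem_singleton.mp hq]; exact hℓ
  · rcases Nat.lt_or_ge j P.length with hj' | hj'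
    · rw [lenOf_append_of_lt hj'] at h2 ⊢
      rw [srcOf_append_of_lt hj', startOf_append_of_le hj'.le]
      exact hP.2 j hj' h2
    · obtain rfl : j = P.length := by simp at hj; omega
      rw [lenOf_append_length] at h2 ⊢
      rw [srcOf_append_length, startOf_append_length]
      exact hs h2

theorem isLZ (hP : LZValid T P) (hsum : (P.map Prod.fst).sum = T.length) : IsLZ T P :=
  ⟨hP.1, hsum, hP.2⟩

end LZValid

/-- Extends a height function to the phrase `(ℓ, s)` appended at position `b`. -/
def extendHeight (H : ℕ → ℕ) (b ℓ s x : ℕ) : ℕ :=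
  if x < b then H x else if ℓ = 1 then 0 else H (s + (x - b) % (b - s)) + 1

theorem extendHeight_of_lt {H : ℕ → ℕ} {b ℓ s x : ℕ} (hx : x < b) :
    extendHeight H b ℓ s x = H x := if_pos hx

theorem extendHeight_add {H : ℕ → ℕ} {b ℓ s : ℕ} (y : ℕ) :
    extendHeight H b ℓ s (b + y) = if ℓ = 1 then 0 else H (s + y % (b - s)) + 1 := by
  simp [extendHeight]

namespace IsHeight

variable {T : List α} {P R : List (ℕ × ℕ)} {H H' : ℕ → ℕ}

theorem of_append (h : IsHeight (P ++ R) H) : IsHeight P H := by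
  intro j hj i hi₁ hi₂
  have := h j (by simp; omega) i
  rw [lenOf_append_of_lt hj, srcOf_append_of_lt hj, startOf_append_of_le hj.le] at this
  exact this hi₁ hi₂

theorem congr (h : IsHeight P H) (hP : LZValid T P)
    (hH : ∀ x < (P.map Prod.fst).sum, H x = H' x) : IsHeight P H' := by
  intro j hj i hi₁ hi₂
  have hend := startOf_add_lenOf_le hj
  refine ⟨fun h1 => ?_, fun h2 => ?_⟩
  · rw [← hH i (by omega)]; exact (h j hj i hi₁ hi₂).1 h1
  · have hsrc := hP.src_lt hj h2
    have hmod := Nat.mod_lt (i - startOf P j) (Nat.sub_pos_of_lt hsrc)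
    rw [← hH i (by omega), ← hH _ (by omega)]
    exact (h j hj i hi₁ hi₂).2 h2

theorem append_singleton (h : IsHeight P H) (hP : LZValid T P) {ℓ s : ℕ}
    (hs : 2 ≤ ℓ → s < (P.map Prod.fst).sum) :
    IsHeight (P ++ [(ℓ, s)]) (extendHeight H (P.map Prod.fst).sum ℓ s) := by
  intro j hj i hi₁ hi₂
  rcases Nat.lt_or_ge j P.length with hj' | hj'
  · rw [lenOf_append_of_lt hj', srcOf_append_of_lt hj', startOf_append_of_le hj'.le] at *
    exact (h.congr hP fun x hx => (extendHeight_of_lt hx).symm) j hj' i hi₁ hi₂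
  · obtain rfl : j = P.length := by simp at hj; omega
    rw [lenOf_append_length, srcOf_append_length, startOf_append_length] at *
    dsimp only at *
    obtain ⟨y, rfl⟩ := Nat.exists_eq_add_of_le hi₁
    rw [extendHeight_add, Nat.add_sub_cancel_left]
    refine ⟨fun h1 => if_pos h1, fun h2 => ?_⟩
    have hmod := Nat.mod_lt y (Nat.sub_pos_of_lt (hs h2))
    rw [if_neg (by omega), extendHeight_of_lt (by omega)]

theorem unique (h : IsHeight P H) (h' : IsHeight P H') (hP : LZValid T P) :
    ∀ x < (P.map Prod.fst).sum, H x = H' x := by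
  induction P using List.reverseRecOn with
  | nil => simp
  | append_singleton R q ih =>
    intro x hx
    rcases Nat.lt_or_ge x (R.map Prod.fst).sum with hxR | hxR
    · exact ih h.of_append h'.of_append hP.of_append x hxR
    have hj : R.length < (R ++ [q]).length := by simp
    have hx' : x < startOf (R ++ [q]) R.length + lenOf (R ++ [q]) R.length := by
      rw [startOf_append_length, lenOf_append_length]; simpa using hx
    have hb : startOf (R ++ [q]) R.length ≤ x := by rwa [startOf_append_length]
    have e := h R.length hj x hb hx'
    have e' := h' R.length hj x hb hx'
    rcases Nat.lt_or_ge (lenOf (R ++ [q]) R.length) 2 with h1 | h2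
    · have h1 : lenOf (R ++ [q]) R.length = 1 := by omega
      rw [e.1 h1, e'.1 h1]
    · have hsrc := hP.src_lt hj h2
      have hmod := Nat.mod_lt (x - startOf (R ++ [q]) R.length) (Nat.sub_pos_of_lt hsrc)
      rw [e.2 h2, e'.2 h2, startOf_append_length] at *
      rw [ih h.of_append h'.of_append hP.of_append _ (by omega)]

end IsHeight

namespace RLSLP

variable (G : RLSLP α) {i b c t : ℕ}

theorem expand_of_leaf {a : α} (h : G.rule i = .leaf a) : G.expand i = [a] := by
  rw [expand, h]

theorem expand_of_pair (h : G.rule i = .pair b c) (hbc : b < i ∧ c < i) :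
    G.expand i = G.expand b ++ G.expand c := by
  rw [expand, h]; exact dif_pos hbc

theorem expand_of_pow (h : G.rule i = .pow b t) (hb : b < i) :
    G.expand i = (List.replicate t (G.expand b)).flatten := by
  rw [expand, h]; exact dif_pos hb

theorem varHeight_of_pair (h : G.rule i = .pair b c) (hbc : b < i ∧ c < i) :
    G.varHeight i = max (G.varHeight b) (G.varHeight c) + 1 := by
  rw [varHeight, h]; exact dif_pos hbc

theorem varHeight_of_pow (h : G.rule i = .pow b t) (hb : b < i) :
    G.varHeight i = G.varHeight b + 1 := by
  rw [varHeight, h]; exact dif_pos hb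

theorem expand_length_pos : ∀ i < G.m, 0 < (G.expand i).length := by
  intro i
  induction i using Nat.strong_induction_on with
  | _ i ih =>
    intro hi
    cases hr : G.rule i with
    | leaf a => simp [G.expand_of_leaf hr]
    | pair b c =>
      have hbc := G.wf_pair i b c hi hr
      have := ih b hbc.1 (by omega)
      rw [G.expand_of_pair hr hbc, List.length_append]
      omega
    | pow b t =>
      have hbt := G.wf_pow i b t hi hr
      have := ih b hbt.1 (by omega)
      rw [G.expand_of_pow hr hbt.1, List.length_flatten, List.map_replicate, List.sum_replicate,
        smul_eq_mul]
      exact Nat.mul_pos (by omega) this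

def powBase (i : ℕ) : ℕ :=
  match G.rule i with
  | .pow b _ => if _h : b < i then powBase b else i
  | _ => i
termination_by i

theorem powBase_of_pow (h : G.rule i = .pow b t) (hb : b < i) : G.powBase i = G.powBase b := by
  rw [powBase, h]; exact dif_pos hb

theorem powBase_of_not_pow (h : ∀ b t, G.rule i ≠ .pow b t) : G.powBase i = i := by
  rw [powBase]
  cases hr : G.rule i with
  | pow b t => exact absurd hr (h b t)
  | _ => rfl

theorem powBase_le : ∀ i, G.powBase i ≤ i := by
  intro i
  induction i using Nat.strong_induction_on with
  | _ i ih =>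
    cases hr : G.rule i with
    | pow b t =>
      by_cases hb : b < i
      · rw [G.powBase_of_pow hr hb]; exact (ih b hb).trans hb.le
      · rw [powBase, hr]; simp [hb]
    | _ => rw [G.powBase_of_not_pow (by simp [hr])]

theorem varHeight_powBase_le : ∀ i, G.varHeight (G.powBase i) ≤ G.varHeight i := by
  intro i
  induction i using Nat.strong_induction_on with
  | _ i ih =>
    cases hr : G.rule i with
    | pow b t =>
      by_cases hb : b < i
      · rw [G.powBase_of_pow hr hb, G.varHeight_of_pow hr hb]; exact (ih b hb).trans (by omega)
      · rw [powBase, hr]; simp [hb]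
    | _ => rw [G.powBase_of_not_pow (by simp [hr])]

theorem rule_powBase_ne_pow : ∀ i < G.m, ∀ b t, G.rule (G.powBase i) ≠ .pow b t := by
  intro i
  induction i using Nat.strong_induction_on with
  | _ i ih =>
    intro hi
    cases hr : G.rule i with
    | pow b t =>
      have hbt := G.wf_pow i b t hi hr
      rw [G.powBase_of_pow hr hbt.1]
      exact ih b hbt.1 (by omega)
    | _ => rw [G.powBase_of_not_pow (by simp [hr]), hr]; simp

theorem expand_eq_flatten_replicate_powBase : ∀ i < G.m,
    ∃ e, 1 ≤ e ∧ G.expand i = (List.replicate e (G.expand (G.powBase i))).flatten := by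
  intro i
  induction i using Nat.strong_induction_on with
  | _ i ih =>
    intro hi
    cases hr : G.rule i with
    | pow b t =>
      have hbt := G.wf_pow i b t hi hr
      obtain ⟨e, he, hexp⟩ := ih b hbt.1 (by omega)
      refine ⟨t * e, Nat.mul_pos (by omega) he, ?_⟩
      rw [G.expand_of_pow hr hbt.1, G.powBase_of_pow hr hbt.1, hexp,
        flatten_replicate_flatten_replicate]
    | _ => exact ⟨1, le_rfl, by rw [G.powBase_of_not_pow (by simp [hr])]; simp⟩

theorem exists_expand_eq_flatten_replicate_of_pow (hi : i < G.m) (h : G.rule i = .pow b t) :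
    ∃ k, 1 ≤ k ∧ G.expand i = (List.replicate (k + 1) (G.expand (G.powBase b))).flatten := by
  obtain ⟨hb, ht⟩ := G.wf_pow i b t hi h
  obtain ⟨e, he, hexp⟩ := G.expand_eq_flatten_replicate_powBase b (hb.trans hi)
  have hte := Nat.mul_le_mul ht he
  refine ⟨t * e - 1, by omega, ?_⟩
  rw [G.expand_of_pow h hb, hexp, flatten_replicate_flatten_replicate,
    Nat.sub_add_cancel (by omega)]

end RLSLP

inductive EncodeMode
  | unfold
  | record
  | copy

def EncodeMode.rank : EncodeMode → ℕ
  | .unfold => 0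
  | .record => 1
  | .copy => 2

/-- Encoding of the occurrence of `i` at `pos` in a left-to-right traversal of the parse tree,
where `seen j = some s` records an earlier occurrence of `G.expand j` at `s`: mode `copy` turns a
recorded variable into one phrase, mode `unfold` applies the rule of `i` once, and mode `record`
unfolds and then records `i`. -/
def encode (G : RLSLP α) (md : EncodeMode) (i pos : ℕ) (seen : ℕ → Option ℕ) :
    List (ℕ × ℕ) × (ℕ → Option ℕ) :=
  match md with
  | .unfold =>
    match G.rule i with
    | .leaf _ => ([(1, 0)], seen)
    | .pair b c =>
      if _h : b < i ∧ c < i then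
        let r := encode G .copy b pos seen
        let r' := encode G .copy c (pos + (G.expand b).length) r.2
        (r.1 ++ r'.1, r'.2)
      else ([], seen)
    | .pow b _ =>
      if _h : b < i then
        let r := encode G .record (G.powBase b) pos seen
        (r.1 ++ [((G.expand i).length - (G.expand (G.powBase b)).length, pos)], r.2)
      else ([], seen)
  | .record =>
    let r := encode G .unfold i pos seen
    (r.1, if seen i = none then Function.update r.2 i (some pos) else r.2)
  | .copy =>
    match seen i with
    | some s => ([((G.expand i).length, s)], seen)
    | none => encode G .record i pos seen
termination_by 3 * i + md.rank
decreasing_by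
  all_goals simp only [EncodeMode.rank]
  all_goals first | omega | have := G.powBase_le b; omega

section Encode

variable {G : RLSLP α} {i b c t pos : ℕ} {seen : ℕ → Option ℕ}

theorem encode_unfold_of_leaf {a : α} (h : G.rule i = .leaf a) :
    encode G .unfold i pos seen = ([(1, 0)], seen) := by
  rw [encode, h]

theorem encode_unfold_of_pair (h : G.rule i = .pair b c) (hbc : b < i ∧ c < i) :
    encode G .unfold i pos seen =
      ((encode G .copy b pos seen).1 ++
          (encode G .copy c (pos + (G.expand b).length) (encode G .copy b pos seen).2).1,
        (encode G .copy c (pos + (G.expand b).length) (encode G .copy b pos seen).2).2) := by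
  rw [encode, h]; exact dif_pos hbc

theorem encode_unfold_of_pow (h : G.rule i = .pow b t) (hb : b < i) :
    encode G .unfold i pos seen =
      ((encode G .record (G.powBase b) pos seen).1 ++
          [((G.expand i).length - (G.expand (G.powBase b)).length, pos)],
        (encode G .record (G.powBase b) pos seen).2) := by
  rw [encode, h]; exact dif_pos hb

theorem encode_record :
    encode G .record i pos seen =
      ((encode G .unfold i pos seen).1,
        if seen i = none then Function.update (encode G .unfold i pos seen).2 i (some pos)
        else (encode G .unfold i pos seen).2) := by
  conv_lhs => rw [encode]

theorem encode_copy_of_some {s : ℕ} (h : seen i = some s) :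
    encode G .copy i pos seen = ([((G.expand i).length, s)], seen) := by
  rw [encode, h]

theorem encode_copy_of_none (h : seen i = none) :
    encode G .copy i pos seen = encode G .record i pos seen := by
  conv_lhs => rw [encode, h]

variable (G) in
theorem encode_snd_of_lt :
    ∀ i pos seen j, i < j → ∀ md, (encode G md i pos seen).2 j = seen j := by
  intro i
  induction i using Nat.strong_induction_on with
  | _ i ih =>
    intro pos seen j hij
    have hu : (encode G .unfold i pos seen).2 j = seen j := by
      cases hr : G.rule i with
      | leaf a => rw [encode_unfold_of_leaf hr]
      | pair b c =>
        by_cases hbc : b < i ∧ c < i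
        · rw [encode_unfold_of_pair hr hbc, ih c hbc.2 _ _ j (by omega),
            ih b hbc.1 _ _ j (by omega)]
        · rw [encode, hr]; simp [hbc]
      | pow b t =>
        by_cases hb : b < i
        · have := G.powBase_le b
          rw [encode_unfold_of_pow hr hb, ih _ (by omega) _ _ j (by omega)]
        · rw [encode, hr]; simp [hb]
    have ht : (encode G .record i pos seen).2 j = seen j := by
      rw [encode_record]
      split_ifs
      · dsimp only
        rw [Function.update_of_ne (show j ≠ i by omega), hu]
      · exact hu
    intro md
    cases md with
    | unfold => exact hu
    | record => exact ht
    | copy =>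
      cases hs : seen i with
      | some s => rw [encode_copy_of_some hs]
      | none => rw [encode_copy_of_none hs, ht]

theorem encode_unfold_snd_self (hi : i < G.m) : (encode G .unfold i pos seen).2 i = seen i := by
  cases hr : G.rule i with
  | leaf a => rw [encode_unfold_of_leaf hr]
  | pair b c =>
    have hbc := G.wf_pair i b c hi hr
    rw [encode_unfold_of_pair hr hbc, encode_snd_of_lt G _ _ _ _ hbc.2,
      encode_snd_of_lt G _ _ _ _ hbc.1]
  | pow b t =>
    have hb := (G.wf_pow i b t hi hr).1
    rw [encode_unfold_of_pow hr hb,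
      encode_snd_of_lt G _ _ _ _ ((G.powBase_le b).trans_lt hb)]

end Encode

def numSeen (n : ℕ) (seen : ℕ → Option ℕ) : ℕ :=
  ((Finset.range n).filter fun j => (seen j).isSome).card

theorem numSeen_le (n : ℕ) (seen : ℕ → Option ℕ) : numSeen n seen ≤ n :=
  (Finset.card_filter_le _ _).trans_eq (Finset.card_range n)

theorem numSeen_update {n i : ℕ} {seen : ℕ → Option ℕ} (hi : i < n) (h : seen i = none)
    (p : ℕ) : numSeen n (Function.update seen i (some p)) = numSeen n seen + 1 := by
  unfold numSeen
  rw [← Finset.card_insert_of_notMem (s := (Finset.range n).filter fun j => (seen j).isSome)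
    (a := i) (by simp [h])]
  congr 1
  ext j
  by_cases hj : j = i
  · subst hj; simp [hi]
  · simp [hj]

theorem numSeen_none (n : ℕ) : numSeen n (fun _ => none) = 0 := by
  simp [numSeen]

section Invariant

variable (G : RLSLP α) (T : List α)

structure EncodeInv (pos : ℕ) (Q : List (ℕ × ℕ)) (H : ℕ → ℕ) (seen : ℕ → Option ℕ) : Prop where
  valid : LZValid T Q
  sum_eq : (Q.map Prod.fst).sum = pos
  isHeight : IsHeight Q H
  seen_le : ∀ j s, seen j = some s → s + (G.expand j).length ≤ pos
  seen_prefix : ∀ j s, seen j = some s → G.expand j <+: T.drop s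
  seen_height :
    ∀ j s, seen j = some s → ∀ k < (G.expand j).length, H (s + k) ≤ G.varHeight j

/-- Charging three phrases to each newly recorded variable, at most `cost` phrases are unpaid. -/
def EncodeSpec (i pos : ℕ) (Q : List (ℕ × ℕ)) (seen : ℕ → Option ℕ)
    (out : List (ℕ × ℕ) × (ℕ → Option ℕ)) (cost slack : ℕ) : Prop :=
  ∃ H, EncodeInv G T (pos + (G.expand i).length) (Q ++ out.1) H out.2 ∧
    (∀ k < (G.expand i).length, H (pos + k) ≤ G.varHeight i + slack) ∧
    out.1.length + 3 * numSeen G.m seen ≤ 3 * numSeen G.m out.2 + cost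

def EncodeCorrect (md : EncodeMode) (i cost slack : ℕ) : Prop :=
  ∀ pos Q H seen, EncodeInv G T pos Q H seen → G.expand i <+: T.drop pos →
    EncodeSpec G T i pos Q seen (encode G md i pos seen) cost slack

def unfoldCost (i : ℕ) : ℕ :=
  match G.rule i with
  | .pow _ _ => 3
  | _ => 2

variable {G T} {i pos : ℕ} {Q : List (ℕ × ℕ)} {H : ℕ → ℕ} {seen : ℕ → Option ℕ}

theorem EncodeInv.nil (H : ℕ → ℕ) : EncodeInv G T 0 [] H (fun _ => none) :=
  ⟨LZValid.nil, rfl, fun _ hj => by simp at hj, by simp, by simp, by simp⟩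

theorem EncodeInv.append_phrase (hI : EncodeInv G T pos Q H seen) {ℓ s : ℕ} (hℓ : 1 ≤ ℓ)
    (hs : 2 ≤ ℓ → s < pos ∧ sub T s ℓ = sub T pos ℓ) :
    EncodeInv G T (pos + ℓ) (Q ++ [(ℓ, s)]) (extendHeight H pos ℓ s) seen := by
  obtain ⟨hv, hsum, hH, hle, hpre, hht⟩ := hI
  subst hsum
  refine ⟨hv.append_singleton hℓ hs, by simp, hH.append_singleton hv fun h => (hs h).1,
    fun j s' h => (hle j s' h).trans (Nat.le_add_right _ _), hpre, fun j s' h k hk => ?_⟩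
  rw [extendHeight_of_lt (by have := hle j s' h; omega)]
  exact hht j s' h k hk

theorem EncodeInv.update (hI : EncodeInv G T pos Q H seen) {p : ℕ}
    (hp : p + (G.expand i).length ≤ pos) (hocc : G.expand i <+: T.drop p)
    (hH : ∀ k < (G.expand i).length, H (p + k) ≤ G.varHeight i) :
    EncodeInv G T pos Q H (Function.update seen i (some p)) := by
  have hcases : ∀ j s, Function.update seen i (some p) j = some s →
      j = i ∧ s = p ∨ seen j = some s := by
    intro j s h
    by_cases hj : j = i
    · subst hj
      rw [Function.update_self, Option.some_inj] at h
      exact Or.inl ⟨rfl, h.symm⟩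
    · rw [Function.update_of_ne hj] at h
      exact Or.inr h
  refine ⟨hI.valid, hI.sum_eq, hI.isHeight, fun j s h => ?_, fun j s h => ?_,
    fun j s h => ?_⟩ <;> obtain ⟨rfl, rfl⟩ | h := hcases j s h
  exacts [hp, hI.seen_le j s h, hocc, hI.seen_prefix j s h, hH, hI.seen_height j s h]

theorem EncodeSpec.mono {out : List (ℕ × ℕ) × (ℕ → Option ℕ)}
    {cost slack cost' slack' : ℕ}
    (h : EncodeSpec G T i pos Q seen out cost slack) (hc : cost ≤ cost') (hs : slack ≤ slack') :
    EncodeSpec G T i pos Q seen out cost' slack' := by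
  obtain ⟨H, hI, hH, hcnt⟩ := h
  exact ⟨H, hI, fun k hk => (hH k hk).trans (by omega), by omega⟩

theorem unfoldCost_le_three (G : RLSLP α) (i : ℕ) : unfoldCost G i ≤ 3 := by
  unfold unfoldCost; split <;> omega

theorem unfoldCost_powBase (hi : i < G.m) : unfoldCost G (G.powBase i) = 2 := by
  unfold unfoldCost
  split
  · exact absurd ‹_› (G.rule_powBase_ne_pow i hi _ _)
  · rfl

end Invariant

section Spec

variable {G : RLSLP α} {T : List α} {i b c t pos : ℕ} {Q : List (ℕ × ℕ)} {H : ℕ → ℕ}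
  {seen : ℕ → Option ℕ}

theorem encodeSpec_copy_of_some (hI : EncodeInv G T pos Q H seen) (hi : i < G.m)
    (hocc : G.expand i <+: T.drop pos) {s : ℕ} (hs : seen i = some s) :
    EncodeSpec G T i pos Q seen (encode G .copy i pos seen) 1 1 := by
  rw [encode_copy_of_some hs]
  have hn := G.expand_length_pos i hi
  have hsn := hI.seen_le i s hs
  refine ⟨_, hI.append_phrase hn fun _ => ⟨by omega, ?_⟩, fun k hk => ?_, ?_⟩
  · rw [sub_eq_of_prefix (hI.seen_prefix i s hs), sub_eq_of_prefix hocc]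
  · rw [extendHeight_add]
    split_ifs
    · omega
    · rw [Nat.mod_eq_of_lt (by omega)]
      exact Nat.add_le_add_right (hI.seen_height i s hs k hk) 1
  · simp only [List.length_singleton]
    omega

theorem encodeSpec_unfold_of_leaf (hI : EncodeInv G T pos Q H seen) {a : α}
    (hr : G.rule i = .leaf a) :
    EncodeSpec G T i pos Q seen (encode G .unfold i pos seen) 1 0 := by
  have hn : (G.expand i).length = 1 := by simp [G.expand_of_leaf hr]
  rw [encode_unfold_of_leaf hr]
  refine ⟨extendHeight H pos 1 0, ?_, fun k _ => ?_, ?_⟩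
  · rw [hn]
    exact hI.append_phrase le_rfl (by omega)
  · rw [extendHeight_add, if_pos rfl]
    exact Nat.zero_le _
  · simp only [List.length_singleton]
    omega

theorem encodeSpec_unfold_of_pair (hI : EncodeInv G T pos Q H seen) (hi : i < G.m)
    (hocc : G.expand i <+: T.drop pos) (hr : G.rule i = .pair b c)
    (hb : EncodeCorrect G T .copy b 1 1) (hc : EncodeCorrect G T .copy c 1 1) :
    EncodeSpec G T i pos Q seen (encode G .unfold i pos seen) 2 0 := by
  have hbc := G.wf_pair i b c hi hr
  have hexp := G.expand_of_pair hr hbc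
  rw [hexp] at hocc
  have hocc' := prefix_drop_of_append_prefix hocc
  obtain ⟨H₁, hI₁, hH₁, hcnt₁⟩ := hb pos Q H seen hI hocc'.1
  obtain ⟨H₂, hI₂, hH₂, hcnt₂⟩ := hc _ _ H₁ _ hI₁ hocc'.2
  have hvH := G.varHeight_of_pair hr hbc
  rw [encode_unfold_of_pair hr hbc]
  refine ⟨H₂, ?_, fun k hk => ?_, ?_⟩
  · rw [hexp, List.length_append, ← Nat.add_assoc, ← List.append_assoc]
    exact hI₂
  · rw [hexp, List.length_append] at hk
    rcases Nat.lt_or_ge k (G.expand b).length with hkb | hkb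
    · have hsum := hI₁.sum_eq
      rw [← hI₁.isHeight.unique hI₂.isHeight.of_append hI₁.valid _ (by omega)]
      have := hH₁ k hkb
      omega
    · obtain ⟨z, rfl⟩ := Nat.exists_eq_add_of_le hkb
      have := hH₂ z (by omega)
      rw [← Nat.add_assoc]
      omega
  · simp only [List.length_append]
    omega

theorem encodeSpec_unfold_of_pow (hI : EncodeInv G T pos Q H seen) (hi : i < G.m)
    (hocc : G.expand i <+: T.drop pos) (hr : G.rule i = .pow b t)
    (hc : EncodeCorrect G T .record (G.powBase b) 2 0) :
    EncodeSpec G T i pos Q seen (encode G .unfold i pos seen) 3 0 := by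
  have hb := (G.wf_pow i b t hi hr).1
  have hL := G.expand_length_pos _ ((G.powBase_le b).trans_lt (hb.trans hi))
  obtain ⟨k, hk, hexp⟩ := G.exists_expand_eq_flatten_replicate_of_pow hi hr
  have hn : (G.expand i).length =
      (G.expand (G.powBase b)).length + k * (G.expand (G.powBase b)).length := by
    rw [hexp, List.length_flatten, List.map_replicate, List.sum_replicate, smul_eq_mul,
      Nat.succ_mul, Nat.add_comm]
  rw [hexp] at hocc
  have hper := sub_eq_sub_of_flatten_replicate_prefix hocc
  rw [List.replicate_succ, List.flatten_cons] at hocc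
  obtain ⟨H₁, hI₁, hH₁, hcnt⟩ := hc pos Q H seen hI (List.prefix_append _ _ |>.trans hocc)
  have hvc := G.varHeight_powBase_le b
  have hvH := G.varHeight_of_pow hr hb
  rw [encode_unfold_of_pow hr hb, hn, Nat.add_sub_cancel_left]
  generalize (G.expand (G.powBase b)).length = L at *
  have hkL : L ≤ k * L := Nat.le_mul_of_pos_left L (by omega)
  refine ⟨extendHeight H₁ (pos + L) (k * L) pos, ?_, fun y hy => ?_, ?_⟩
  · have := hI₁.append_phrase (ℓ := k * L) (s := pos) (by omega) fun _ => ⟨by omega, hper⟩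
    rwa [List.append_assoc, Nat.add_assoc, ← hn] at this
  · rcases Nat.lt_or_ge y L with hyL | hyL
    · rw [extendHeight_of_lt (by omega)]
      have := hH₁ y hyL
      omega
    · obtain ⟨z, rfl⟩ := Nat.exists_eq_add_of_le hyL
      rw [← Nat.add_assoc, extendHeight_add, Nat.add_sub_cancel_left]
      split_ifs
      · omega
      · have := hH₁ (z % L) (Nat.mod_lt z hL)
        omega
  · simp only [List.length_append, List.length_singleton]
    omega

theorem encodeSpec_record_of_none (hi : i < G.m)
    (hocc : G.expand i <+: T.drop pos) (hnone : seen i = none) {cost : ℕ}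
    (hu : EncodeSpec G T i pos Q seen (encode G .unfold i pos seen) cost 0) (hcost : cost ≤ 3) :
    EncodeSpec G T i pos Q seen (encode G .record i pos seen) 0 0 := by
  obtain ⟨H', hI', hH', hcnt⟩ := hu
  rw [encode_record, if_pos hnone]
  refine ⟨H', hI'.update le_rfl hocc hH', hH', ?_⟩
  dsimp only
  rw [numSeen_update hi ((encode_unfold_snd_self hi).trans hnone)]
  omega

theorem encodeCorrect_record (hi : i < G.m) {cost : ℕ} (hu : EncodeCorrect G T .unfold i cost 0)
    (hcost : cost ≤ 3) : EncodeCorrect G T .record i cost 0 := by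
  intro pos Q H seen hI hocc
  cases hs : seen i with
  | none =>
    exact (encodeSpec_record_of_none hi hocc hs (hu _ _ _ _ hI hocc) hcost).mono
      (Nat.zero_le _) le_rfl
  | some s =>
    rw [encode_record, if_neg (by simp [hs])]
    exact hu _ _ _ _ hI hocc

theorem encodeCorrect_copy (hi : i < G.m) {cost : ℕ} (hu : EncodeCorrect G T .unfold i cost 0)
    (hcost : cost ≤ 3) : EncodeCorrect G T .copy i 1 1 := by
  intro pos Q H seen hI hocc
  cases hs : seen i with
  | none =>
    rw [encode_copy_of_none hs]
    exact (encodeSpec_record_of_none hi hocc hs (hu _ _ _ _ hI hocc) hcost).mono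
      (Nat.zero_le _) (Nat.zero_le _)
  | some s => exact encodeSpec_copy_of_some hI hi hocc hs

variable (G T) in
theorem encodeCorrect_unfold : ∀ i < G.m, EncodeCorrect G T .unfold i (unfoldCost G i) 0 := by
  intro i
  induction i using Nat.strong_induction_on with
  | _ i ih =>
    intro hi pos Q H seen hI hocc
    cases hr : G.rule i with
    | leaf a =>
      exact (encodeSpec_unfold_of_leaf hI hr).mono (by simp [unfoldCost, hr]) le_rfl
    | pair b c =>
      have hbc := G.wf_pair i b c hi hr
      have hcopy : ∀ j < i, EncodeCorrect G T .copy j 1 1 := fun j hj =>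
        encodeCorrect_copy (by omega) (ih j hj (by omega)) (unfoldCost_le_three G j)
      simpa [unfoldCost, hr] using
        encodeSpec_unfold_of_pair hI hi hocc hr (hcopy b hbc.1) (hcopy c hbc.2)
    | pow b t =>
      have hb := (G.wf_pow i b t hi hr).1
      have hc := (G.powBase_le b).trans_lt hb
      have hcost := unfoldCost_powBase (G := G) (hb.trans hi)
      have := encodeCorrect_record (by omega) (ih _ hc (by omega)) (by omega)
      rw [hcost] at this
      simpa [unfoldCost, hr] using encodeSpec_unfold_of_pow hI hi hocc hr this

end Spec

/-- For an absolute constant `C`: if an RLSLP `G` generates `T` and its parse tree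
has height `h`, then `T` has an `h`-bounded LZ-like encoding of size at most
`C` times the size of `G`. -/
theorem stmt9 :
    ∃ C : ℕ, 0 < C ∧
      ∀ (α : Type) (G : RLSLP α) (T : List α), G.Generates T →
        ∃ P : List (ℕ × ℕ), IsLZ T P ∧ HBounded T P G.parseHeight ∧
          P.length ≤ C * G.m := by
  refine ⟨3, by norm_num, fun α G T (hT : G.expand (G.m - 1) = T) => ?_⟩
  have hm : G.m - 1 < G.m := Nat.sub_lt G.m_pos one_pos
  have hocc : G.expand (G.m - 1) <+: T.drop 0 := by rw [List.drop_zero, ← hT]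
  obtain ⟨H, hI, hH, hcnt⟩ := encodeSpec_record_of_none hm hocc rfl
    (encodeCorrect_unfold G T _ hm _ _ _ _ (EncodeInv.nil 0) hocc) (unfoldCost_le_three G _)
  rw [List.nil_append] at hI
  simp only [Nat.zero_add, Nat.add_zero, hT] at hI hH
  refine ⟨_, hI.valid.isLZ hI.sum_eq, ⟨H, hI.isHeight, fun x hx => hH x hx⟩, ?_⟩
  have := numSeen_le G.m (encode G .record (G.m - 1) 0 fun _ => none).2
  rw [numSeen_none] at hcnt
  omega
end

section
/- For every string T, there exists an LZ-like encoding of T of size z(T) whose height is at most z(T) − 1; consequently, z^h(T) = z(T) for every h ≥ z(T) − 1. -/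
variable {α : Type*}

-- ===================== auxiliary development =====================

section AuxLZ
variable {α : Type*}

lemma lpf_bdd (T : List α) (b : ℕ) :
    BddAbove {l | b + l ≤ T.length ∧ ∃ s < b, sub T s l = sub T b l} :=
  ⟨T.length, fun l hl => by have := hl.1; omega⟩

lemma lpf_le (T : List α) {b l : ℕ} (h1 : b + l ≤ T.length)
    (h2 : ∃ s < b, sub T s l = sub T b l) : l ≤ lpf T b :=
  le_csSup (lpf_bdd T b) ⟨h1, h2⟩

lemma lpf_mem (T : List α) {b : ℕ} (h : 1 ≤ lpf T b) :
    b + lpf T b ≤ T.length ∧ ∃ s < b, sub T s (lpf T b) = sub T b (lpf T b) := by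
  have hne : {l | b + l ≤ T.length ∧ ∃ s < b, sub T s l = sub T b l}.Nonempty := by
    by_contra hc
    rw [Set.not_nonempty_iff_eq_empty] at hc
    rw [lpf, hc] at h
    simp at h
  exact Nat.sSup_mem hne (lpf_bdd T b)

lemma lpf_add (T : List α) {b : ℕ} (hb : b < T.length) :
    b + max 1 (lpf T b) ≤ T.length := by
  rcases le_or_gt (lpf T b) 1 with h | h
  · omega
  · have := (lpf_mem T (b := b) (by omega)).1
    omega

lemma sub_shift (T : List α) {s b ℓ : ℕ} (d : ℕ) (h : sub T s ℓ = sub T b ℓ) :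
    sub T (s + d) (ℓ - d) = sub T (b + d) (ℓ - d) := by
  have key : ∀ x : ℕ, sub T (x + d) (ℓ - d) = (sub T x ℓ).drop d := by
    intro x
    simp only [sub, List.drop_take, List.drop_drop]
  rw [key, key, h]

lemma lzCount_eq_pos (T : List α) {b : ℕ} (hb : b < T.length) :
    lzCount T b = lzCount T (b + max 1 (lpf T b)) + 1 := by
  rw [lzCount, dif_pos hb]

lemma lzCount_eq_zero (T : List α) {b : ℕ} (hb : ¬ b < T.length) :
    lzCount T b = 0 := by
  rw [lzCount, dif_neg hb]

lemma reach (T : List α) {b b' : ℕ} (h : b ≤ b') (hb : b < T.length) :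
    b + max 1 (lpf T b) ≤ b' + max 1 (lpf T b') := by
  set m := max 1 (lpf T b) with hm
  rcases le_or_gt (b + m) b' with h1 | h1
  · have : 1 ≤ max 1 (lpf T b') := le_max_left _ _
    omega
  rcases le_or_gt (lpf T b) 1 with h2 | h2
  · have : m = 1 := by omega
    have : b = b' ∨ b + 1 = b' := by omega
    rcases this with rfl | rfl
    · omega
    · have : 1 ≤ max 1 (lpf T (b+1)) := le_max_left _ _
      omega
  · have hmem := lpf_mem T (b := b) (by omega)
    have hml : m = lpf T b := by omega
    obtain ⟨hlen, s, hs, hsub⟩ := hmem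
    have hsh := sub_shift T (b' - b) hsub
    have he1 : s + (b' - b) < b' := by omega
    have : m - (b' - b) ≤ lpf T b' := by
      apply lpf_le T
      · omega
      · refine ⟨s + (b' - b), he1, ?_⟩
        rw [← hml] at hsh
        convert hsh using 2
        omega
    have : m - (b' - b) ≤ max 1 (lpf T b') := le_trans this (le_max_right _ _)
    omega

lemma lzCount_mono (T : List α) (b b' : ℕ) (h : b ≤ b') :
    lzCount T b' ≤ lzCount T b := by
  by_cases hb : b < T.length
  · by_cases hb' : b' < T.length
    · rw [lzCount_eq_pos T hb, lzCount_eq_pos T hb']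
      have hr := reach T h hb
      have := lzCount_mono T (b + max 1 (lpf T b)) (b' + max 1 (lpf T b')) hr
      omega
    · rw [lzCount_eq_zero T hb']
      omega
  · have h2 : ¬ b' < T.length := by omega
    rw [lzCount_eq_zero T hb, lzCount_eq_zero T h2]
termination_by T.length - b
decreasing_by
  have h1 : 1 ≤ max 1 (lpf T b) := le_max_left _ _
  omega

lemma startOf_zero (P : List (ℕ × ℕ)) : startOf P 0 = 0 := rfl

lemma startOf_cons (q : ℕ × ℕ) (P : List (ℕ × ℕ)) (j : ℕ) :
    startOf (q :: P) (j + 1) = q.1 + startOf P j := by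
  simp [startOf, List.take_succ_cons]

lemma lenOf_cons_zero (q : ℕ × ℕ) (P : List (ℕ × ℕ)) : lenOf (q :: P) 0 = q.1 := by
  simp [lenOf]

lemma lenOf_cons_succ (q : ℕ × ℕ) (P : List (ℕ × ℕ)) (j : ℕ) :
    lenOf (q :: P) (j + 1) = lenOf P j := by simp [lenOf]

lemma srcOf_cons_zero (q : ℕ × ℕ) (P : List (ℕ × ℕ)) : srcOf (q :: P) 0 = q.2 := by
  simp [srcOf]

lemma srcOf_cons_succ (q : ℕ × ℕ) (P : List (ℕ × ℕ)) (j : ℕ) :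
    srcOf (q :: P) (j + 1) = srcOf P j := by simp [srcOf]

lemma lenOf_eq (P : List (ℕ × ℕ)) {j : ℕ} (hj : j < P.length) : lenOf P j = P[j].1 := by
  simp [lenOf, List.getElem?_eq_getElem hj]

lemma lenOf_pos (P : List (ℕ × ℕ)) (hpos : ∀ q ∈ P, 1 ≤ q.1) {j : ℕ} (hj : j < P.length) :
    1 ≤ lenOf P j := by
  rw [lenOf_eq P hj]
  exact hpos _ (List.getElem_mem hj)

lemma startOf_succ (P : List (ℕ × ℕ)) {j : ℕ} (hj : j < P.length) :
    startOf P (j + 1) = startOf P j + lenOf P j := by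
  rw [startOf, startOf, List.take_succ, List.getElem?_eq_getElem hj, lenOf_eq P hj,
    Option.toList_some, List.map_append, List.sum_append]
  simp

lemma startOf_le (P : List (ℕ × ℕ)) {j j' : ℕ} (h : j ≤ j') :
    startOf P j ≤ startOf P j' := by
  have heq : P.take j = (P.take j').take j := by rw [List.take_take, min_eq_left h]
  rw [startOf, startOf, heq]
  conv_rhs => rw [← List.take_append_drop j (P.take j')]
  rw [List.map_append, List.sum_append]
  exact Nat.le_add_right _ _

lemma startOf_length (P : List (ℕ × ℕ)) : startOf P P.length = (P.map Prod.fst).sum := by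
  simp [startOf]

lemma phrase_unique (P : List (ℕ × ℕ)) {j j' i : ℕ}
    (hj : j < P.length) (hj' : j' < P.length)
    (h1 : startOf P j ≤ i) (h2 : i < startOf P j + lenOf P j)
    (h3 : startOf P j' ≤ i) (h4 : i < startOf P j' + lenOf P j') : j = j' := by
  rcases lt_trichotomy j j' with h | h | h
  · have := startOf_succ P hj
    have := startOf_le P (show j + 1 ≤ j' by omega)
    omega
  · exact h
  · have := startOf_succ P hj'
    have := startOf_le P (show j' + 1 ≤ j by omega)
    omega

lemma phrase_cover (P : List (ℕ × ℕ)) {j i : ℕ} (hj : j ≤ P.length)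
    (hi : i < startOf P j) :
    ∃ j' < j, startOf P j' ≤ i ∧ i < startOf P j' + lenOf P j' := by
  induction j with
  | zero => simp [startOf_zero] at hi
  | succ j ih =>
    have hjP : j < P.length := by omega
    rw [startOf_succ P hjP] at hi
    rcases lt_or_ge i (startOf P j) with h | h
    · obtain ⟨j', h1, h2, h3⟩ := ih (by omega) h
      exact ⟨j', by omega, h2, h3⟩
    · exact ⟨j, by omega, h, hi⟩

open Classical in
noncomputable def lzSrc (T : List α) (b : ℕ) : ℕ :=
  if h : ∃ s < b, sub T s (lpf T b) = sub T b (lpf T b) then h.choose else 0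

noncomputable def lzParse (T : List α) (b : ℕ) : List (ℕ × ℕ) :=
  if hb : b < T.length then
    (max 1 (lpf T b), lzSrc T b) :: lzParse T (b + max 1 (lpf T b))
  else []
termination_by T.length - b
decreasing_by
  have h1 : 1 ≤ max 1 (lpf T b) := le_max_left _ _
  omega

lemma lzParse_length (T : List α) (b : ℕ) : (lzParse T b).length = lzCount T b := by
  by_cases hb : b < T.length
  · rw [lzParse, dif_pos hb, lzCount, dif_pos hb, List.length_cons,
      lzParse_length T (b + max 1 (lpf T b))]
  · rw [lzParse, dif_neg hb, lzCount, dif_neg hb, List.length_nil]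
termination_by T.length - b
decreasing_by
  have h1 : 1 ≤ max 1 (lpf T b) := le_max_left _ _
  omega

lemma lzSrc_spec (T : List α) {b : ℕ} (h : 2 ≤ lpf T b) :
    lzSrc T b < b ∧ sub T (lzSrc T b) (lpf T b) = sub T b (lpf T b) := by
  obtain ⟨-, hex⟩ := lpf_mem T (b := b) (by omega)
  rw [lzSrc, dif_pos hex]
  exact ⟨hex.choose_spec.1, hex.choose_spec.2⟩

lemma lzParse_spec (T : List α) (b : ℕ) (hb : b ≤ T.length) :
    (∀ q ∈ lzParse T b, 1 ≤ q.1) ∧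
    ((lzParse T b).map Prod.fst).sum + b = T.length ∧
    ∀ j < (lzParse T b).length, 2 ≤ lenOf (lzParse T b) j →
      srcOf (lzParse T b) j < b + startOf (lzParse T b) j ∧
      sub T (srcOf (lzParse T b) j) (lenOf (lzParse T b) j) =
        sub T (b + startOf (lzParse T b) j) (lenOf (lzParse T b) j) := by
  by_cases hblt : b < T.length
  · have hadd := lpf_add T hblt
    have ih := lzParse_spec T (b + max 1 (lpf T b)) hadd
    rw [lzParse, dif_pos hblt]
    set m := max 1 (lpf T b) with hm
    set R := lzParse T (b + m) with hR
    refine ⟨?_, ?_, ?_⟩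
    · intro q hq
      rcases List.mem_cons.mp hq with rfl | hq
      · exact le_max_left _ _
      · exact ih.1 q hq
    · have := ih.2.1
      simp only [List.map_cons, List.sum_cons]
      omega
    · intro j hj h2
      match j with
      | 0 =>
        rw [lenOf_cons_zero] at h2 ⊢
        rw [srcOf_cons_zero]
        have hlpf2 : 2 ≤ lpf T b := by
          rcases le_or_gt (lpf T b) 1 with h | h
          · simp only [hm] at h2; omega
          · omega
        have hml : m = lpf T b := by omega
        obtain ⟨h1, h2'⟩ := lzSrc_spec T hlpf2
        simp only [startOf, List.take_zero, List.map_nil, List.sum_nil, Nat.add_zero]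
        rw [hml]
        exact ⟨h1, h2'⟩
      | j + 1 =>
        rw [lenOf_cons_succ] at h2 ⊢
        rw [srcOf_cons_succ, startOf_cons]
        have := ih.2.2 j (by simpa using hj) h2
        constructor
        · omega
        · have heq : b + (m + startOf R j) = b + m + startOf R j := by omega
          rw [heq]
          exact this.2
  · have hbe : b = T.length := by omega
    rw [lzParse, dif_neg hblt]
    simp [hbe]
termination_by T.length - b
decreasing_by
  have h1 : 1 ≤ max 1 (lpf T b) := le_max_left _ _
  omega

def Covers (P : List (ℕ × ℕ)) (j i : ℕ) : Prop :=
  j < P.length ∧ startOf P j ≤ i ∧ i < startOf P j + lenOf P j ∧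
    2 ≤ lenOf P j ∧ srcOf P j < startOf P j

open Classical in
noncomputable def hgt (P : List (ℕ × ℕ)) (i : ℕ) : ℕ :=
  if h : ∃ j, Covers P j i then
    hgt P (srcOf P h.choose + (i - startOf P h.choose) % (startOf P h.choose - srcOf P h.choose)) + 1
  else 0
termination_by i
decreasing_by
  obtain ⟨hj, h1, h2, h3, h4⟩ := h.choose_spec
  have := Nat.mod_lt (i - startOf P h.choose)
    (show 0 < startOf P h.choose - srcOf P h.choose by omega)
  omega

lemma hgt_isHeight (P : List (ℕ × ℕ)) (hpos : ∀ q ∈ P, 1 ≤ q.1)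
    (hsrc : ∀ j < P.length, 2 ≤ lenOf P j → srcOf P j < startOf P j) :
    IsHeight P (hgt P) := by
  intro j hj i h1 h2
  constructor
  · intro hlen1
    rw [hgt, dif_neg]
    rintro ⟨j', hj', h1', h2', h3', h4'⟩
    have heq := phrase_unique P hj hj' h1 h2 h1' h2'
    rw [← heq] at h3'
    omega
  · intro hlen2
    have hex : ∃ j', Covers P j' i := ⟨j, hj, h1, h2, hlen2, hsrc j hj hlen2⟩
    have hch : hex.choose = j := by
      obtain ⟨hj', h1', h2', h3', h4'⟩ := hex.choose_spec
      exact phrase_unique P hj' hj h1' h2' h1 h2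
    rw [hgt, dif_pos hex, hch]

lemma hgt_le (P : List (ℕ × ℕ)) (hpos : ∀ q ∈ P, 1 ≤ q.1)
    (i : ℕ) : ∀ j < P.length, startOf P j ≤ i → i < startOf P j + lenOf P j →
      hgt P i ≤ j := by
  intro j hj h1 h2
  by_cases hex : ∃ j', Covers P j' i
  · rw [hgt, dif_pos hex]
    have hch : hex.choose = j := by
      obtain ⟨hj', h1', h2', h3', h4'⟩ := hex.choose_spec
      exact phrase_unique P hj' hj h1' h2' h1 h2
    obtain ⟨hj', h1', h2', h3', h4'⟩ := hex.choose_spec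
    rw [hch] at h1' h2' h3' h4' ⊢
    set i' := srcOf P j + (i - startOf P j) % (startOf P j - srcOf P j) with hi'
    have hmod := Nat.mod_lt (i - startOf P j) (show 0 < startOf P j - srcOf P j by omega)
    have hi'lt : i' < startOf P j := by omega
    obtain ⟨j'', hj''lt, hc1, hc2⟩ := phrase_cover P (le_of_lt hj) hi'lt
    have := hgt_le P hpos i' j'' (by omega) hc1 hc2
    omega
  · rw [hgt, dif_neg hex]
    omega
termination_by i
decreasing_by
  omega

lemma greedy_opt (T : List α) (P : List (ℕ × ℕ)) (hLZ : IsLZ T P) :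
    lzCount T 0 ≤ P.length := by
  obtain ⟨hpos, hsum, hmatch⟩ := hLZ
  have key : ∀ k, k ≤ P.length → lzCount T (startOf P (P.length - k)) ≤ k := by
    intro k
    induction k with
    | zero =>
      intro _
      rw [Nat.sub_zero, startOf_length, hsum, lzCount_eq_zero T (lt_irrefl _)]
    | succ k ih =>
      intro hk
      set j := P.length - (k + 1) with hj
      have hjlt : j < P.length := by omega
      have hstep := startOf_succ P hjlt
      have hub : startOf P (j + 1) ≤ T.length := by
        rw [← hsum, ← startOf_length]
        exact startOf_le P (by omega)
      have hlen1 := lenOf_pos P hpos hjlt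
      have hblt : startOf P j < T.length := by omega
      rw [lzCount_eq_pos T hblt]
      have hreach : lenOf P j ≤ max 1 (lpf T (startOf P j)) := by
        rcases le_or_gt (lenOf P j) 1 with h | h
        · omega
        · have hm := hmatch j hjlt h
          have : lenOf P j ≤ lpf T (startOf P j) :=
            lpf_le T (by omega) ⟨srcOf P j, hm.1, hm.2⟩
          omega
      have hmono : lzCount T (startOf P j + max 1 (lpf T (startOf P j))) ≤
          lzCount T (startOf P (j + 1)) := by
        apply lzCount_mono
        omega
      have hjj : j + 1 = P.length - k := by omega
      rw [hjj] at hmono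
      have := ih (by omega)
      omega
  have := key P.length le_rfl
  simpa [startOf] using this

end AuxLZ

/-- Every string has an LZ-like encoding of size `z(T)` whose height is at most
`z(T) - 1`; consequently `z^h(T) = z(T)` for every `h ≥ z(T) - 1`. -/
theorem stmt11 (T : List α) :
    (∃ P : List (ℕ × ℕ), IsLZ T P ∧ P.length = lzCount T 0 ∧
      HBounded T P (lzCount T 0 - 1)) ∧
    (∀ h : ℕ, lzCount T 0 - 1 ≤ h → zh T h = lzCount T 0) := by
  set P := lzParse T 0 with hP
  have hspec := lzParse_spec T 0 (Nat.zero_le _)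
  rw [← hP] at hspec
  have hpos := hspec.1
  have hsum : (P.map Prod.fst).sum = T.length := by have := hspec.2.1; omega
  have hmatch : ∀ j < P.length, 2 ≤ lenOf P j →
      srcOf P j < startOf P j ∧
      sub T (srcOf P j) (lenOf P j) = sub T (startOf P j) (lenOf P j) := by
    intro j hj h2
    have := hspec.2.2 j hj h2
    simpa using this
  have hLZ : IsLZ T P := ⟨hpos, hsum, hmatch⟩
  have hlen : P.length = lzCount T 0 := lzParse_length T 0
  have hsrc : ∀ j < P.length, 2 ≤ lenOf P j → srcOf P j < startOf P j :=
    fun j hj h2 => (hmatch j hj h2).1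
  have hH := hgt_isHeight P hpos hsrc
  have hbound : ∀ i < T.length, hgt P i ≤ lzCount T 0 - 1 := by
    intro i hi
    have hi' : i < startOf P P.length := by rw [startOf_length, hsum]; exact hi
    obtain ⟨j, hjlt, h1, h2⟩ := phrase_cover P le_rfl hi'
    have := hgt_le P hpos i j hjlt h1 h2
    omega
  have hHB : HBounded T P (lzCount T 0 - 1) := ⟨hgt P, hH, hbound⟩
  refine ⟨⟨P, hLZ, hlen, hHB⟩, ?_⟩
  intro h hh
  have hmem : lzCount T 0 ∈
      {k | ∃ P' : List (ℕ × ℕ), IsLZ T P' ∧ HBounded T P' h ∧ P'.length = k} :=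
    ⟨P, hLZ, ⟨hgt P, hH, fun i hi => le_trans (hbound i hi) hh⟩, hlen⟩
  refine le_antisymm (Nat.sInf_le hmem) (le_csInf ⟨_, hmem⟩ ?_)
  rintro k ⟨P', hLZ', -, hlen'⟩
  exact hlen' ▸ greedy_opt T P' hLZ'
end

section
/- Let T[b..b+ℓ) be a phrase of a modified LZ-like encoding of T (so either it has minimum period 1, or it has minimum period p ≥ 2 and its length-p prefix T[b..b+p) has an occurrence starting before b). Then at most two phrases of the greedy LZ77 parsing of T start at a position in the interval [b, b+ℓ). -/
variable {α : Type*}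

section AuxLemmas
variable {α : Type*}

lemma sub_length (T : List α) (i ℓ : ℕ) (h : i + ℓ ≤ T.length) : (sub T i ℓ).length = ℓ := by
  simp [sub]; omega

lemma sub_getElem? (T : List α) (i ℓ k : ℕ) (hk : k < ℓ) :
    (sub T i ℓ)[k]? = T[i + k]? := by
  rw [sub, List.getElem?_take, if_pos hk, List.getElem?_drop]

lemma sub_drop (T : List α) (i ℓ r : ℕ) : (sub T i ℓ).drop r = sub T (i + r) (ℓ - r) := by
  rw [sub, sub, List.drop_take, List.drop_drop]

lemma sub_ext {T : List α} {a x m : ℕ} (ha : a + m ≤ T.length) (hx : x + m ≤ T.length)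
    (h : ∀ k < m, T[a + k]? = T[x + k]?) : sub T a m = sub T x m := by
  apply List.ext_getElem?
  intro k
  by_cases hk : k < m
  · rw [sub_getElem? _ _ _ _ hk, sub_getElem? _ _ _ _ hk]; exact h k hk
  · rw [List.getElem?_eq_none, List.getElem?_eq_none] <;> rw [sub_length] <;> omega

lemma lpf_ge (T : List α) (x m : ℕ) (hm : x + m ≤ T.length)
    (h : ∃ s < x, sub T s m = sub T x m) : m ≤ lpf T x :=
  le_csSup ⟨T.length, fun l hl => by have := hl.1; omega⟩ ⟨hm, h⟩

lemma isPeriod_minPeriod {w : List α} (hw : 0 < w.length) : IsPeriod w (minPeriod w) := by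
  have hwp : IsPeriod w w.length := ⟨hw, le_refl _, fun i hi => absurd hi (by omega)⟩
  exact Nat.sInf_mem (⟨w.length, hwp⟩ : Set.Nonempty {p | IsPeriod w p})

lemma period_step {T : List α} {b ℓ p : ℕ} (hp : IsPeriod (sub T b ℓ) p)
    (hn : b + ℓ ≤ T.length) {i : ℕ} (h1 : b ≤ i) (h2 : i + p < b + ℓ) :
    T[i]? = T[i + p]? := by
  have hlen : (sub T b ℓ).length = ℓ := sub_length T b ℓ hn
  have hp1 : 0 < p := hp.1
  have := hp.2.2 (i - b) (by rw [hlen]; omega)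
  rw [sub_getElem? T b ℓ (i - b) (by omega), sub_getElem? T b ℓ (i - b + p) (by omega)] at this
  have e1 : b + (i - b) = i := by omega
  have e2 : b + (i - b + p) = i + p := by omega
  rwa [e1, e2] at this

lemma subB {T : List α} {b ℓ p x : ℕ} (hp : IsPeriod (sub T b ℓ) p) (hn : b + ℓ ≤ T.length)
    (hx1 : b + p ≤ x) (hx2 : x < b + ℓ) :
    sub T (x - p) (b + ℓ - x) = sub T x (b + ℓ - x) := by
  have hp1 : 0 < p := hp.1
  apply sub_ext (by omega) (by omega)
  intro k hk
  have := period_step hp hn (i := x - p + k) (by omega) (by omega)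
  have e : x - p + k + p = x + k := by omega
  rwa [e] at this

lemma lzStarts_ge_aux (T : List α) :
    ∀ k c, T.length - c ≤ k → ∀ x ∈ lzStarts T c, c ≤ x := by
  intro k
  induction k with
  | zero =>
    intro c hc x hx
    rw [lzStarts, dif_neg (by omega)] at hx
    cases hx
  | succ k ih =>
    intro c hc x hx
    rw [lzStarts] at hx
    by_cases h : c < T.length
    · rw [dif_pos h] at hx
      rcases List.mem_cons.mp hx with rfl | hx
      · exact le_refl _
      · have hmax := le_max_left 1 (lpf T c)
        have := ih (c + max 1 (lpf T c)) (by omega) x hx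
        omega
    · rw [dif_neg h] at hx; cases hx

lemma lzStarts_ge (T : List α) (c : ℕ) : ∀ x ∈ lzStarts T c, c ≤ x :=
  lzStarts_ge_aux T T.length c (by omega)

lemma count0 {T : List α} {b ℓ c : ℕ} (hc : b + ℓ ≤ c) :
    ((lzStarts T c).countP fun x => decide (b ≤ x ∧ x < b + ℓ)) = 0 := by
  rw [List.countP_eq_zero]
  intro a ha
  have := lzStarts_ge T c a ha
  simp only [decide_eq_true_eq]
  omega

lemma count1 {T : List α} {b ℓ p : ℕ}
    (hB : ∀ c, b + p ≤ c → c < b + ℓ → b + ℓ ≤ c + max 1 (lpf T c)) :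
    ∀ c, b + p ≤ c → ((lzStarts T c).countP fun x => decide (b ≤ x ∧ x < b + ℓ)) ≤ 1 := by
  intro c hc
  by_cases h2 : c < b + ℓ
  · by_cases h : c < T.length
    · rw [lzStarts, dif_pos h, List.countP_cons, count0 (hB c hc h2)]
      split <;> omega
    · rw [lzStarts, dif_neg h]; simp
  · rw [count0 (by omega)]
    omega

lemma count2 {T : List α} {b ℓ p : ℕ}
    (hA : ∀ c, b ≤ c → c < b + p → b + p ≤ c + max 1 (lpf T c))
    (hB : ∀ c, b + p ≤ c → c < b + ℓ → b + ℓ ≤ c + max 1 (lpf T c)) :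
    ∀ c, b ≤ c → ((lzStarts T c).countP fun x => decide (b ≤ x ∧ x < b + ℓ)) ≤ 2 := by
  intro c hc
  by_cases hcp : b + p ≤ c
  · exact le_trans (count1 hB c hcp) (by omega)
  · by_cases h : c < T.length
    · rw [lzStarts, dif_pos h, List.countP_cons]
      have := count1 hB (c + max 1 (lpf T c)) (hA c hc (by omega))
      split <;> omega
    · rw [lzStarts, dif_neg h]; simp

lemma count_main {T : List α} {b ℓ p : ℕ}
    (hA : ∀ c, b ≤ c → c < b + p → b + p ≤ c + max 1 (lpf T c))
    (hB : ∀ c, b + p ≤ c → c < b + ℓ → b + ℓ ≤ c + max 1 (lpf T c)) :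
    ∀ k c, T.length - c ≤ k → c ≤ b →
      ((lzStarts T c).countP fun x => decide (b ≤ x ∧ x < b + ℓ)) ≤ 2 := by
  intro k
  induction k with
  | zero =>
    intro c hk hc
    rw [lzStarts, dif_neg (by omega)]
    simp
  | succ k ih =>
    intro c hk hc
    rcases eq_or_lt_of_le hc with rfl | hlt
    · exact count2 hA hB c (le_refl _)
    · by_cases h : c < T.length
      · rw [lzStarts, dif_pos h, List.countP_cons]
        have hpred : (decide (b ≤ c ∧ c < b + ℓ)) = false := by
          simp only [decide_eq_false_iff_not]
          omega
        rw [hpred]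
        simp only [Bool.false_eq_true, if_false, Nat.add_zero]
        have hmax := le_max_left 1 (lpf T c)
        by_cases hc' : c + max 1 (lpf T c) ≤ b
        · exact ih (c + max 1 (lpf T c)) (by omega) hc'
        · exact count2 hA hB (c + max 1 (lpf T c)) (by omega)
      · rw [lzStarts, dif_neg h]; simp

end AuxLemmas

/-- If `T[b..b+ℓ)` is a valid phrase of a modified LZ-like encoding (either its
minimum period is 1, or its minimum period is `p ≥ 2` and its length-`p` prefix
occurs starting before `b`), then at most two phrases of the greedy LZ77 parsing
of `T` start in `[b, b+ℓ)`. -/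
theorem stmt14 (T : List α) (b ℓ : ℕ) (hl : 1 ≤ ℓ) (hn : b + ℓ ≤ T.length)
    (hphrase : minPeriod (sub T b ℓ) = 1 ∨
      (2 ≤ minPeriod (sub T b ℓ) ∧ ∃ s < b,
        sub T s (minPeriod (sub T b ℓ)) = sub T b (minPeriod (sub T b ℓ)))) :
    ((lzStarts T 0).countP fun x => decide (b ≤ x ∧ x < b + ℓ)) ≤ 2 := by
  set p := minPeriod (sub T b ℓ) with hp_def
  have hwlen : (sub T b ℓ).length = ℓ := sub_length T b ℓ hn
  have hper : IsPeriod (sub T b ℓ) p := isPeriod_minPeriod (by rw [hwlen]; omega)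
  have hp1 : 0 < p := hper.1
  have hpl : p ≤ ℓ := hwlen ▸ hper.2.1
  have hA : ∀ c, b ≤ c → c < b + p → b + p ≤ c + max 1 (lpf T c) := by
    intro c h1 h2
    rcases hphrase with h1' | ⟨hp2, s, hs, hsub⟩
    · have hmax := le_max_left 1 (lpf T c)
      omega
    · rcases eq_or_lt_of_le h1 with rfl | h1''
      · have : p ≤ lpf T b := lpf_ge T b p (by omega) ⟨s, hs, hsub⟩
        have := le_max_right 1 (lpf T b)
        omega
      · have key : sub T (s + (c - b)) (p - (c - b)) = sub T c (p - (c - b)) := by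
          have h1e : (sub T s p).drop (c - b) = (sub T b p).drop (c - b) := by rw [hsub]
          rw [sub_drop, sub_drop] at h1e
          have e : b + (c - b) = c := by omega
          rwa [e] at h1e
        have : p - (c - b) ≤ lpf T c :=
          lpf_ge T c _ (by omega) ⟨s + (c - b), by omega, key⟩
        have := le_max_right 1 (lpf T c)
        omega
  have hB : ∀ c, b + p ≤ c → c < b + ℓ → b + ℓ ≤ c + max 1 (lpf T c) := by
    intro c h1 h2
    have key := subB hper hn h1 h2
    have : b + ℓ - c ≤ lpf T c := lpf_ge T c _ (by omega) ⟨c - p, by omega, key⟩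
    have := le_max_right 1 (lpf T c)
    omega
  exact count_main hA hB T.length 0 (by omega) (by omega)
end
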